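/- arXiv:2403.16117 — 7 statements merged into one kernel-verified Lean document; each statement's English description precedes it below -/
import Mathlib

section
/- Let A ∈ ℤ^{d×n} be an integer matrix, let Δ = max_{j∈[d], i∈[n]} |A_{j,i}|, let u ∈ ℕ^n with u_i ≥ 1 for all i ∈ [n], let x ∈ ℕ^n with x ≤ u componentwise, and set b = Ax. Then there exists x' ∈ ℕ^n such that, with u' ∈ ℕ^n defined by u'_i = ⌊(u_i − 1)/2⌋ for every i ∈ [n]: (i) x' ≤ u' componentwise; (ii) ‖2Ax' − b‖_∞ ≤ 2nΔ; and (iii) 0 ≤ x_i − 2x'_i ≤ u_i − 2u'_i ≤ 2 for every i ∈ [n]. -/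
/-!
Take `x'ᵢ = min ⌊xᵢ/2⌋ u'ᵢ`. Then `xᵢ - 2x'ᵢ` lies between `0` and `uᵢ - 2u'ᵢ ≤ 2`, so every
entry of `2Ax' - b = A(2x' - x)` is a sum of `n` terms of absolute value at most `2Δ`.
-/

open Finset

lemma abs_sum_mul_le_card_mul {ι R : Type*} [Fintype ι] [CommRing R] [LinearOrder R]
    [IsStrictOrderedRing R] {a e : ι → R} {Δ c : R} (ha : ∀ i, |a i| ≤ Δ) (he : ∀ i, |e i| ≤ c) :
    |∑ i, a i * e i| ≤ c * Fintype.card ι * Δ := by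
  calc |∑ i, a i * e i| ≤ ∑ i, |a i * e i| := abs_sum_le_sum_abs _ _
    _ ≤ ∑ _i : ι, c * Δ := by
        refine sum_le_sum fun i _ => ?_
        rw [abs_mul, mul_comm c]
        exact mul_le_mul (ha i) (he i) (abs_nonneg _) ((abs_nonneg _).trans (ha i))
    _ = c * Fintype.card ι * Δ := by
        rw [sum_const, card_univ, nsmul_eq_mul]
        ring

lemma sub_two_mul_min_half_bounds {x u : ℕ} (h : x ≤ u) :
    0 ≤ (x : ℤ) - 2 * ((min (x / 2) ((u - 1) / 2) : ℕ) : ℤ) ∧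
      (x : ℤ) - 2 * ((min (x / 2) ((u - 1) / 2) : ℕ) : ℤ) ≤ (u : ℤ) - 2 * (((u - 1) / 2 : ℕ) : ℤ) ∧
      (u : ℤ) - 2 * (((u - 1) / 2 : ℕ) : ℤ) ≤ 2 := by
  refine ⟨?_, ?_, ?_⟩ <;> push_cast <;> omega

theorem stmt0_general (d n : ℕ) (A : Matrix (Fin d) (Fin n) ℤ) (Δ : ℤ)
    (hΔ : IsGreatest {x : ℤ | ∃ j i, |A j i| = x} Δ)
    (u x : Fin n → ℕ) (hx : ∀ i, x i ≤ u i) :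
    ∃ x' : Fin n → ℕ,
      (∀ i, x' i ≤ (u i - 1) / 2) ∧
      (∀ j : Fin d,
        |2 * ∑ i, A j i * (x' i : ℤ) - ∑ i, A j i * (x i : ℤ)| ≤ 2 * n * Δ) ∧
      (∀ i, 0 ≤ (x i : ℤ) - 2 * (x' i : ℤ) ∧
        (x i : ℤ) - 2 * (x' i : ℤ) ≤ (u i : ℤ) - 2 * (((u i - 1) / 2 : ℕ) : ℤ) ∧
        (u i : ℤ) - 2 * (((u i - 1) / 2 : ℕ) : ℤ) ≤ 2) := by
  set x' : Fin n → ℕ := fun i => min (x i / 2) ((u i - 1) / 2)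
  have hbounds i := sub_two_mul_min_half_bounds (hx i)
  refine ⟨x', fun i => min_le_right _ _, fun j => ?_, hbounds⟩
  have hrow : 2 * ∑ i, A j i * (x' i : ℤ) - ∑ i, A j i * (x i : ℤ)
      = ∑ i, A j i * (2 * (x' i : ℤ) - x i) := by
    rw [mul_sum, ← sum_sub_distrib]
    exact sum_congr rfl fun i _ => by ring
  have hstep i : |2 * (x' i : ℤ) - x i| ≤ 2 := by
    obtain ⟨h₀, h₁, h₂⟩ := hbounds i
    rw [abs_le]
    constructor <;> linarith
  simpa [hrow] using abs_sum_mul_le_card_mul (fun i => hΔ.2 ⟨j, i, rfl⟩) hstep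

/-- halving lemma for bounded ILP solutions.
`A ∈ ℤ^{d×n}`, `Δ` the maximum absolute value of an entry of `A`,
`u ∈ ℕ^n` with `u i ≥ 1`, `x ∈ ℕ^n` with `x ≤ u`, `b = Ax`.  Then there is
`x' ∈ ℕ^n` with `x' ≤ u' := ⌊(u-1)/2⌋`, `‖2Ax' - b‖_∞ ≤ 2nΔ` and
`0 ≤ x i - 2 x' i ≤ u i - 2 u' i ≤ 2` for all `i`. -/
theorem stmt0 (d n : ℕ) (A : Matrix (Fin d) (Fin n) ℤ) (Δ : ℤ)
    (hΔ : IsGreatest {x : ℤ | ∃ j i, |A j i| = x} Δ)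
    (u x : Fin n → ℕ) (hu : ∀ i, 1 ≤ u i) (hx : ∀ i, x i ≤ u i) :
    ∃ x' : Fin n → ℕ,
      (∀ i, x' i ≤ (u i - 1) / 2) ∧
      (∀ j : Fin d,
        |2 * ∑ i, A j i * (x' i : ℤ) - ∑ i, A j i * (x i : ℤ)| ≤ 2 * n * Δ) ∧
      (∀ i, 0 ≤ (x i : ℤ) - 2 * (x' i : ℤ) ∧
        (x i : ℤ) - 2 * (x' i : ℤ) ≤ (u i : ℤ) - 2 * (((u i - 1) / 2 : ℕ) : ℤ) ∧
        (u i : ℤ) - 2 * (((u i - 1) / 2 : ℕ) : ℤ) ≤ 2) :=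
  stmt0_general d n A Δ hΔ u x hx
end

section
/- Let A ∈ ℤ^{d×n} be an integer matrix, let Δ = max_{j∈[d], i∈[n]} |A_{j,i}|, let b ∈ ℤ^d, let k ∈ ℕ, and let x^{(0)}, x^{(1)}, …, x^{(k)} ∈ ℕ^n satisfy Ax^{(0)} = b and ‖2Ax^{(j)} − Ax^{(j−1)}‖_∞ ≤ 2nΔ for every j ∈ [k]. Then, viewing all quantities in ℚ^d, for every j ∈ [k] one has ‖Ax^{(j)} − b/2^j‖_∞ ≤ nΔ·∑_{i=1}^{j} 2^{1−i} ≤ 2nΔ. -/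
/-!
Halving the recursion `2 y_j ≈ y_{j-1}` halves the accumulated error: writing
`y_j - c/2^j = (2 y_j - y_{j-1})/2 + (y_{j-1} - c/2^{j-1})/2`, an error bound `e_j` satisfies
`e_j ≤ M + e_{j-1}/2` with `e_0 = 0`, whence `e_j ≤ M (2 - 2^{1-j})`, which is the geometric sum.
-/

open Finset

section

variable {K : Type*} [Field K] [LinearOrder K] [IsStrictOrderedRing K]

theorem two_zpow_one_sub_succ (m : ℕ) :
    (2 : K) ^ (1 - ((m + 1 : ℕ) : ℤ)) = 2 ^ (1 - (m : ℤ)) / 2 := by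
  rw [Nat.cast_succ, sub_add_eq_sub_sub, zpow_sub₀ two_ne_zero, zpow_one]

theorem sum_Icc_two_zpow_one_sub (j : ℕ) :
    ∑ i ∈ Icc 1 j, (2 : K) ^ (1 - (i : ℤ)) = 2 - 2 ^ (1 - (j : ℤ)) := by
  induction j with
  | zero => norm_num
  | succ m ih =>
    rw [sum_Icc_succ_top (by omega), ih, two_zpow_one_sub_succ]
    ring

theorem abs_sub_div_two_pow_le_of_abs_two_mul_sub_le (y : ℕ → K) (c M : K) (k : ℕ)
    (h0 : y 0 = c) (hstep : ∀ j < k, |2 * y (j + 1) - y j| ≤ 2 * M) :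
    ∀ j ≤ k, |y j - c / 2 ^ j| ≤ M * (2 - 2 ^ (1 - (j : ℤ))) := by
  intro j
  induction j with
  | zero => intro _; norm_num [h0]
  | succ m ih =>
    intro hm
    have hsplit : y (m + 1) - c / 2 ^ (m + 1) =
        (2 * y (m + 1) - y m) / 2 + (y m - c / 2 ^ m) / 2 := by
      field_simp
      ring
    calc |y (m + 1) - c / 2 ^ (m + 1)|
        ≤ |2 * y (m + 1) - y m| / 2 + |y m - c / 2 ^ m| / 2 := by
          rw [hsplit]
          refine (abs_add_le _ _).trans_eq ?_
          rw [abs_div, abs_div, abs_two]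
      _ ≤ 2 * M / 2 + M * (2 - 2 ^ (1 - (m : ℤ))) / 2 := by
          gcongr
          exacts [hstep m hm, ih (by omega)]
      _ = M * (2 - 2 ^ (1 - ((m + 1 : ℕ) : ℤ))) := by
          rw [two_zpow_one_sub_succ]
          ring

end

/-- iterated halving keeps proximity to `b/2^j`.
If `Ax⁽⁰⁾ = b` and `‖2Ax⁽ʲ⁾ − Ax⁽ʲ⁻¹⁾‖_∞ ≤ 2nΔ` for `j ∈ [k]`, then (in ℚ)
`‖Ax⁽ʲ⁾ − b/2^j‖_∞ ≤ nΔ ∑_{i=1}^{j} 2^{1−i} ≤ 2nΔ` for every `j ∈ [k]`. -/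
theorem stmt1 (d n k : ℕ) (A : Matrix (Fin d) (Fin n) ℤ) (Δ : ℤ)
    (hΔ : IsGreatest {x : ℤ | ∃ j i, |A j i| = x} Δ)
    (b : Fin d → ℤ) (x : ℕ → Fin n → ℕ)
    (h0 : ∀ r : Fin d, ∑ i, A r i * (x 0 i : ℤ) = b r)
    (hstep : ∀ j, 1 ≤ j → j ≤ k → ∀ r : Fin d,
      |2 * ∑ i, A r i * (x j i : ℤ) - ∑ i, A r i * (x (j - 1) i : ℤ)| ≤ 2 * n * Δ) :
    ∀ j, 1 ≤ j → j ≤ k →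
      (∀ r : Fin d,
        |((∑ i, A r i * (x j i : ℤ) : ℤ) : ℚ) - (b r : ℚ) / 2 ^ j|
          ≤ (n : ℚ) * (Δ : ℚ) * ∑ i ∈ Finset.Icc 1 j, (2 : ℚ) ^ (1 - (i : ℤ))) ∧
      (n : ℚ) * (Δ : ℚ) * ∑ i ∈ Finset.Icc 1 j, (2 : ℚ) ^ (1 - (i : ℤ))
        ≤ 2 * (n : ℚ) * (Δ : ℚ) := by
  intro j _ hjk
  rw [sum_Icc_two_zpow_one_sub]
  refine ⟨fun r => ?_, ?_⟩
  · refine abs_sub_div_two_pow_le_of_abs_two_mul_sub_le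
      (fun m => ((∑ i, A r i * (x m i : ℤ) : ℤ) : ℚ)) _ _ k (by exact_mod_cast h0 r)
      (fun m hm => ?_) j hjk
    have := hstep (m + 1) (by omega) (by omega) r
    rw [Nat.add_sub_cancel] at this
    rw [← mul_assoc]
    exact_mod_cast this
  · have hΔ0 : 0 ≤ Δ := by
      obtain ⟨r, i, h⟩ := hΔ.1
      exact h ▸ abs_nonneg _
    rw [mul_assoc 2, mul_comm 2]
    gcongr
    exact sub_le_self _ (by positivity)
end

section
/- Let A be a d-dimensional array of size L, let W = max over all positions v of |A_v|, and set c = 2W + 1. Define an array A' of size L by A'_0 = max{0, A_0} and A'_v = A_v + c·‖v‖₁ for every position v ≠ 0. Then: (i) A'_v ≥ 0 for every position v; (ii) A' is monotone increasing; (iii) A' is superadditive if and only if A is superadditive; and (iv) every entry of A' is at most W + (2W + 1)·‖L − 1‖₁. -/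
/-!
Off the origin, `A'` differs from `A` by the additive function `v ↦ c‖v‖₁`, so the
superadditivity inequalities at `u`, `v - u` both nonzero are the same for `A` and `A'`; the
degenerate ones (`u = 0` or `u = v`) just say `A 0 ≤ 0`, resp. `A' 0 = max 0 (A 0) ≤ 0`, which are
equivalent. Since `|A| ≤ W` and `u < v` forces `‖u‖₁ + 1 ≤ ‖v‖₁`, the term `c‖v‖₁` with
`c = 2W + 1` outweighs any difference `A u - A v ≤ 2W`, which gives monotonicity; at a nonzero
position it pushes `A'` above `W ≥ A' 0`.
-/

variable {ι : Type*}

def positions (L : ι → ℕ) : Set (ι → ℕ) := {v | ∀ i, v i < L i}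

theorem mem_positions_of_le {L u v : ι → ℕ} (huv : u ≤ v) (hv : v ∈ positions L) :
    u ∈ positions L :=
  fun i => (huv i).trans_lt (hv i)

def SuperadditiveOn (L : ι → ℕ) (X : (ι → ℕ) → ℤ) : Prop :=
  ∀ u v, v ∈ positions L → u ≤ v → X u + X (v - u) ≤ X v

theorem superadditiveOn_iff {L : ι → ℕ} (hL : ∀ i, 0 < L i) {X : (ι → ℕ) → ℤ} :
    SuperadditiveOn L X ↔
      X 0 ≤ 0 ∧ ∀ u v, v ∈ positions L → u ≤ v → u ≠ 0 → u ≠ v → X u + X (v - u) ≤ X v := by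
  refine ⟨fun H => ⟨?_, fun u v hv huv _ _ => H u v hv huv⟩, ?_⟩
  · simpa using H 0 0 hL le_rfl
  · rintro ⟨h0, H⟩ u v hv huv
    by_cases hu : u = 0
    · subst hu
      simpa using h0
    by_cases huv' : u = v
    · subst huv'
      simpa using h0
    exact H u v hv huv hu huv'

section Fintype

variable [Fintype ι]

theorem sum_natCast_tsub {u v : ι → ℕ} (huv : u ≤ v) :
    ∑ i, ((v - u) i : ℤ) = ∑ i, (v i : ℤ) - ∑ i, (u i : ℤ) := by
  rw [← Finset.sum_sub_distrib]
  exact Finset.sum_congr rfl fun i _ => Nat.cast_sub (huv i)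

theorem sum_natCast_lt_sum_natCast {u v : ι → ℕ} (huv : u < v) :
    ∑ i, (u i : ℤ) < ∑ i, (v i : ℤ) := by
  exact_mod_cast Fintype.sum_strictMono huv

theorem one_le_sum_natCast {v : ι → ℕ} (hv : v ≠ 0) : 1 ≤ ∑ i, (v i : ℤ) := by
  have := sum_natCast_lt_sum_natCast (pos_iff_ne_zero.mpr hv)
  simp only [Pi.zero_apply, Nat.cast_zero, Finset.sum_const_zero] at this
  omega

theorem superadditiveOn_iff_of_eq_add_mul_sum {L : ι → ℕ} (hL : ∀ i, 0 < L i)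
    {X Y : (ι → ℕ) → ℤ} (c : ℤ) (h0 : Y 0 ≤ 0 ↔ X 0 ≤ 0)
    (hY : ∀ v ∈ positions L, v ≠ 0 → Y v = X v + c * ∑ i, (v i : ℤ)) :
    SuperadditiveOn L Y ↔ SuperadditiveOn L X := by
  have defect : ∀ u v, v ∈ positions L → u ≤ v → u ≠ 0 → u ≠ v →
      Y u + Y (v - u) - Y v = X u + X (v - u) - X v := by
    intro u v hv huv hu huv'
    have hvu : v - u ≠ 0 := fun h => huv' (huv.antisymm (tsub_eq_zero_iff_le.mp h))
    rw [hY u (mem_positions_of_le huv hv) hu, hY v hv (ne_bot_of_le_ne_bot hu huv),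
      hY (v - u) (mem_positions_of_le tsub_le_self hv) hvu, sum_natCast_tsub huv]
    ring
  rw [superadditiveOn_iff hL, superadditiveOn_iff hL, h0]
  refine and_congr_right fun _ => ⟨fun H u v hv huv hu huv' => ?_, fun H u v hv huv hu huv' => ?_⟩
  · linarith [H u v hv huv hu huv', defect u v hv huv hu huv']
  · linarith [H u v hv huv hu huv', defect u v hv huv hu huv']

structure IsLinearShift (L : ι → ℕ) (W : ℤ) (A A' : (ι → ℕ) → ℤ) : Prop where
  abs_apply_le : ∀ v ∈ positions L, |A v| ≤ W
  apply_zero : A' 0 = max 0 (A 0)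
  apply_of_ne_zero : ∀ v ∈ positions L, v ≠ 0 → A' v = A v + (2 * W + 1) * ∑ i, (v i : ℤ)

namespace IsLinearShift

variable {L : ι → ℕ} {W : ℤ} {A A' : (ι → ℕ) → ℤ}

theorem nonneg_of_mem (h : IsLinearShift L W A A') {v : ι → ℕ} (hv : v ∈ positions L) : 0 ≤ W :=
  (abs_nonneg _).trans (h.abs_apply_le v hv)

theorem apply_zero_le (h : IsLinearShift L W A A') (h0 : (0 : ι → ℕ) ∈ positions L) : A' 0 ≤ W := by
  rw [h.apply_zero]
  exact max_le (h.nonneg_of_mem h0) ((le_abs_self _).trans (h.abs_apply_le 0 h0))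

theorem lt_apply (h : IsLinearShift L W A A') {v : ι → ℕ} (hv : v ∈ positions L) (hv0 : v ≠ 0) : W < A' v := by
  have hA := (abs_le.mp (h.abs_apply_le v hv)).1
  have hc : 2 * W + 1 ≤ (2 * W + 1) * ∑ i, (v i : ℤ) :=
    le_mul_of_one_le_right (by linarith [h.nonneg_of_mem hv]) (one_le_sum_natCast hv0)
  rw [h.apply_of_ne_zero v hv hv0]
  linarith

theorem nonneg (h : IsLinearShift L W A A') {v : ι → ℕ} (hv : v ∈ positions L) : 0 ≤ A' v := by
  by_cases hv0 : v = 0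
  · subst hv0
    exact h.apply_zero ▸ le_max_left _ _
  · exact (h.nonneg_of_mem hv).trans (h.lt_apply hv hv0).le

theorem monotoneOn (h : IsLinearShift L W A A') : MonotoneOn A' (positions L) := by
  intro u hu v hv huv
  rcases huv.eq_or_lt with rfl | huv
  · exact le_rfl
  have hv0 : v ≠ 0 := ne_bot_of_gt huv
  by_cases hu0 : u = 0
  · subst hu0
    exact ((h.apply_zero_le hu).trans_lt (h.lt_apply hv hv0)).le
  have hAu := (abs_le.mp (h.abs_apply_le u hu)).2
  have hAv := (abs_le.mp (h.abs_apply_le v hv)).1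
  have hc : 2 * W + 1 ≤ (2 * W + 1) * (∑ i, (v i : ℤ) - ∑ i, (u i : ℤ)) :=
    le_mul_of_one_le_right (by linarith [h.nonneg_of_mem hv])
      (by linarith [sum_natCast_lt_sum_natCast huv])
  rw [h.apply_of_ne_zero u hu hu0, h.apply_of_ne_zero v hv hv0]
  linarith

theorem le_bound (h : IsLinearShift L W A A') {v : ι → ℕ} (hv : v ∈ positions L) :
    A' v ≤ W + (2 * W + 1) * ∑ i, ((L i : ℤ) - 1) := by
  have hc : 0 ≤ 2 * W + 1 := by linarith [h.nonneg_of_mem hv]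
  have hsum : ∑ i, (v i : ℤ) ≤ ∑ i, ((L i : ℤ) - 1) :=
    Finset.sum_le_sum fun i _ => by have := hv i; omega
  by_cases hv0 : v = 0
  · subst hv0
    have := mul_le_mul_of_nonneg_left hsum hc
    simp only [Pi.zero_apply, Nat.cast_zero, Finset.sum_const_zero, mul_zero] at this
    linarith [h.apply_zero_le hv]
  · rw [h.apply_of_ne_zero v hv hv0]
    linarith [(abs_le.mp (h.abs_apply_le v hv)).2, mul_le_mul_of_nonneg_left hsum hc]

end IsLinearShift

end Fintype

theorem stmt2_general (d : ℕ) (L : Fin d → ℕ)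
    (A A' : (Fin d → ℕ) → ℤ) (W c : ℤ)
    (hW : IsGreatest {x : ℤ | ∃ v : Fin d → ℕ, (∀ i, v i < L i) ∧ |A v| = x} W)
    (hc : c = 2 * W + 1)
    (hA'0 : A' 0 = max 0 (A 0))
    (hA' : ∀ v : Fin d → ℕ, (∀ i, v i < L i) → v ≠ 0 →
      A' v = A v + c * ∑ i, (v i : ℤ)) :
    (∀ v : Fin d → ℕ, (∀ i, v i < L i) → 0 ≤ A' v) ∧
    (∀ u v : Fin d → ℕ, (∀ i, v i < L i) → (∀ i, u i ≤ v i) → A' u ≤ A' v) ∧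
    ((∀ u v : Fin d → ℕ, (∀ i, v i < L i) → (∀ i, u i ≤ v i) →
        A' u + A' (v - u) ≤ A' v) ↔
      (∀ u v : Fin d → ℕ, (∀ i, v i < L i) → (∀ i, u i ≤ v i) →
        A u + A (v - u) ≤ A v)) ∧
    (∀ v : Fin d → ℕ, (∀ i, v i < L i) →
      A' v ≤ W + (2 * W + 1) * ∑ i, ((L i : ℤ) - 1)) := by
  subst hc
  have hshift : IsLinearShift L W A A' := ⟨fun v hv => hW.2 ⟨v, hv, rfl⟩, hA'0, hA'⟩
  have hL : ∀ i, 0 < L i := by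
    obtain ⟨v, hv, -⟩ := hW.1
    exact fun i => (Nat.zero_le _).trans_lt (hv i)
  exact ⟨fun v hv => hshift.nonneg hv,
    fun u v hv huv => hshift.monotoneOn (mem_positions_of_le huv hv) hv huv,
    superadditiveOn_iff_of_eq_add_mul_sum hL _ (by simp [hA'0]) hA',
    fun v hv => hshift.le_bound hv⟩

/-- making an array nonnegative and monotone while preserving
superadditivity.  `A` is an array of size `L` (entries indexed by positions
`v` with `v i < L i`), `W = max_v |A v|`, `c = 2W + 1`, and `A'` is defined by
`A' 0 = max 0 (A 0)` and `A' v = A v + c‖v‖₁` for positions `v ≠ 0`.  Then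
(i) `A'` is nonnegative, (ii) `A'` is monotone increasing, (iii) `A'` is
superadditive iff `A` is, and (iv) every entry of `A'` is at most
`W + (2W+1)‖L−1‖₁`. -/
theorem stmt2 (d : ℕ) (L : Fin d → ℕ) (hL : ∀ i, 1 ≤ L i)
    (A A' : (Fin d → ℕ) → ℤ) (W c : ℤ)
    (hW : IsGreatest {x : ℤ | ∃ v : Fin d → ℕ, (∀ i, v i < L i) ∧ |A v| = x} W)
    (hc : c = 2 * W + 1)
    (hA'0 : A' 0 = max 0 (A 0))
    (hA' : ∀ v : Fin d → ℕ, (∀ i, v i < L i) → v ≠ 0 →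
      A' v = A v + c * ∑ i, (v i : ℤ)) :
    (∀ v : Fin d → ℕ, (∀ i, v i < L i) → 0 ≤ A' v) ∧
    (∀ u v : Fin d → ℕ, (∀ i, v i < L i) → (∀ i, u i ≤ v i) → A' u ≤ A' v) ∧
    ((∀ u v : Fin d → ℕ, (∀ i, v i < L i) → (∀ i, u i ≤ v i) →
        A' u + A' (v - u) ≤ A' v) ↔
      (∀ u v : Fin d → ℕ, (∀ i, v i < L i) → (∀ i, u i ≤ v i) →
        A u + A (v - u) ≤ A v)) ∧
    (∀ v : Fin d → ℕ, (∀ i, v i < L i) →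
      A' v ≤ W + (2 * W + 1) * ∑ i, ((L i : ℤ) - 1)) :=
  stmt2_general d L A A' W c hW hc hA'0 hA'
end

section
/- Let A, B, C be d-dimensional arrays of size L, let K = 1 + 2·max over all positions v of max{|A_v|, |B_v|, |C_v|}, and let e denote the first standard unit vector of ℕ^d. Define an array M of size L' = L + 3L₁·e (so L'₁ = 4L₁ and L'_i = L_i for i ≥ 2) by: M_0 = 0; M_v = −10K for every position v of M with v₁ < L₁ and v ≠ 0; and, for every position u ≤ L − 1: M_{L₁·e + u} = K + A_u, M_{2L₁·e + u} = 4K + B_u, and M_{3L₁·e + u} = 5K + C_u. Then M is superadditive if and only if (A ⊕ B)_v ≤ C_v for every position v ≤ L − 1. -/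
/-!
Cut `M` along the first axis into four blocks of length `L₁`: a dummy block followed by blocks
carrying `K + A`, `4K + B` and `5K + C`. When `u + w = v`, the block indices of `u` and `w` add
up to that of `v`, up to a carry of one. The base weights `-10, 1, 4, 5` of the blocks satisfy
`w a + w b + 2 ≤ w c` for every such triple except `1 + 2 = 3` (in either order), and since
`2K > 3 Kmax` this slack absorbs the array entries. In the remaining case there is no carry, the
offsets inside the blocks add exactly, and superadditivity there reads `A x + B y ≤ C (x + y)`.
-/

section Blocks

variable {d : ℕ} (e : Fin d) (L : Fin d → ℕ)

theorem ite_add_eq_add_single (f u : Fin d → ℕ) :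
    (fun i => if i = e then f i + u i else u i) = u + Pi.single e (f e) := by
  funext i
  by_cases hi : i = e
  · subst hi; simp [add_comm]
  · simp [hi]

theorem exists_add_single_eq {m : ℕ} {p : Fin d → ℕ}
    (hp : ∀ i, p i < (L + Pi.single e (m * L e) : Fin d → ℕ) i) :
    ∃ k ≤ m, ∃ q : Fin d → ℕ, (∀ i, q i < L i) ∧ q + Pi.single e (k * L e) = p := by
  have hpe : p e < (m + 1) * L e := by simpa [add_mul, add_comm] using hp e
  have hLe : 0 < L e := Nat.pos_of_ne_zero fun h => by simp [h] at hpe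
  refine ⟨p e / L e, Nat.lt_succ_iff.mp ((Nat.div_lt_iff_lt_mul hLe).mpr hpe),
    Function.update p e (p e % L e), fun i => ?_, funext fun i => ?_⟩
  · by_cases hi : i = e
    · subst hi; simpa using Nat.mod_lt _ hLe
    · simpa [hi] using hp i
  · by_cases hi : i = e
    · subst hi; simp [Nat.mod_add_div']
    · simp [hi]

theorem block_add_or_carry {a b c : ℕ} {x y z : Fin d → ℕ}
    (hx : ∀ i, x i < L i) (hy : ∀ i, y i < L i) (hz : ∀ i, z i < L i)
    (h : x + Pi.single e (a * L e) + (y + Pi.single e (b * L e)) = z + Pi.single e (c * L e)) :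
    (c = a + b ∧ x + y = z) ∨ c = a + b + 1 := by
  have he : x e + y e + (a + b) * L e = z e + c * L e := by
    have := congrFun h e; simp only [Pi.add_apply, Pi.single_eq_same] at this; linarith
  have hlow : a + b < c + 1 := Nat.lt_of_mul_lt_mul_right (a := L e) (by nlinarith [hz e])
  have hhigh : c < a + b + 2 := Nat.lt_of_mul_lt_mul_right (a := L e) (by nlinarith [hx e, hy e])
  rcases (by omega : c = a + b ∨ c = a + b + 1) with rfl | hc
  · refine .inl ⟨rfl, funext fun i => ?_⟩
    by_cases hi : i = e
    · subst hi; simp only [Pi.add_apply]; linarith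
    · simpa [hi] using congrFun h i
  · exact .inr hc

theorem add_single_sub_add_single {u v : Fin d → ℕ} {k m : ℕ} (huv : u ≤ v) (hkm : k ≤ m) :
    v + Pi.single e m - (u + Pi.single e k) = v - u + Pi.single e (m - k) := by
  funext i
  by_cases hi : i = e
  · subst hi
    have : u i ≤ v i := huv i
    simp only [Pi.add_apply, Pi.sub_apply, Pi.single_eq_same]
    omega
  · simp [hi]

end Blocks

def blockWeight : ℕ → ℤ
  | 0 => -10
  | 1 => 1
  | 2 => 4
  | _ => 5

theorem blockWeight_add_add_two_le {a b c : ℕ} (hc : c ≤ 3) (hcarry : c = a + b ∨ c = a + b + 1)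
    (htight : ¬((a = 1 ∧ b = 2) ∨ (a = 2 ∧ b = 1))) :
    blockWeight a + blockWeight b + 2 ≤ blockWeight c := by
  have ha : a ≤ 3 := by omega
  have hb : b ≤ 3 := by omega
  interval_cases a <;> interval_cases b <;> rcases hcarry with rfl | rfl <;>
    simp_all [blockWeight]

theorem add_le_of_abs_sub_blockWeight_le {K Kmax x y z : ℤ} {a b c : ℕ}
    (hKmax : 0 ≤ Kmax) (hK : K = 1 + 2 * Kmax)
    (hx : |x - blockWeight a * K| ≤ Kmax) (hy : |y - blockWeight b * K| ≤ Kmax)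
    (hz : |z - blockWeight c * K| ≤ Kmax)
    (hw : blockWeight a + blockWeight b + 2 ≤ blockWeight c) : x + y ≤ z := by
  have hslack : (blockWeight a + blockWeight b + 2) * K ≤ blockWeight c * K :=
    mul_le_mul_of_nonneg_right hw (by omega)
  rw [abs_le] at hx hy hz
  nlinarith

section Superadditivity

variable {d : ℕ} (e : Fin d) (L : Fin d → ℕ) {A B C M : (Fin d → ℕ) → ℤ} {K : ℤ}

theorem convolution_le_of_superadditive
    (hMA : ∀ q, (∀ i, q i < L i) → M (q + Pi.single e (L e)) = K + A q)
    (hMB : ∀ q, (∀ i, q i < L i) → M (q + Pi.single e (2 * L e)) = 4 * K + B q)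
    (hMC : ∀ q, (∀ i, q i < L i) → M (q + Pi.single e (3 * L e)) = 5 * K + C q)
    (hM : ∀ u v : Fin d → ℕ, (∀ i, v i < (L + Pi.single e (3 * L e) : Fin d → ℕ) i) → u ≤ v →
      M u + M (v - u) ≤ M v)
    (u v : Fin d → ℕ) (hv : ∀ i, v i < L i) (huv : u ≤ v) : A u + B (v - u) ≤ C v := by
  have hsup := hM (u + Pi.single e (L e)) (v + Pi.single e (3 * L e))
    (fun i => add_lt_add_of_lt_of_le (hv i) le_rfl)
    (add_le_add huv (Pi.single_mono e (by omega : L e ≤ 3 * L e)))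
  rw [add_single_sub_add_single e huv (by omega), show 3 * L e - L e = 2 * L e by omega,
    hMA u (fun i => (huv i).trans_lt (hv i)),
    hMB (v - u) (fun i => (Nat.sub_le _ _).trans_lt (hv i)), hMC v hv] at hsup
  linarith

theorem superadditive_of_convolution_le {Kmax : ℤ} (hKmax : 0 ≤ Kmax) (hK : K = 1 + 2 * Kmax)
    (hABC : ∀ q, (∀ i, q i < L i) → |A q| ≤ Kmax ∧ |B q| ≤ Kmax ∧ |C q| ≤ Kmax)
    (hM0 : M 0 = 0) (hMneg : ∀ q, (∀ i, q i < L i) → q ≠ 0 → M q = -10 * K)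
    (hMA : ∀ q, (∀ i, q i < L i) → M (q + Pi.single e (L e)) = K + A q)
    (hMB : ∀ q, (∀ i, q i < L i) → M (q + Pi.single e (2 * L e)) = 4 * K + B q)
    (hMC : ∀ q, (∀ i, q i < L i) → M (q + Pi.single e (3 * L e)) = 5 * K + C q)
    (hconv : ∀ u v : Fin d → ℕ, (∀ i, v i < L i) → u ≤ v → A u + B (v - u) ≤ C v)
    (u v : Fin d → ℕ) (hv : ∀ i, v i < (L + Pi.single e (3 * L e) : Fin d → ℕ) i) (huv : u ≤ v) :
    M u + M (v - u) ≤ M v := by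
  have hblock : ∀ k ≤ 3, ∀ q : Fin d → ℕ, (∀ i, q i < L i) → q + Pi.single e (k * L e) ≠ 0 →
      |M (q + Pi.single e (k * L e)) - blockWeight k * K| ≤ Kmax := by
    intro k hk q hq hq0
    interval_cases k
    · simp only [zero_mul, Pi.single_zero, add_zero] at hq0 ⊢
      simpa [hMneg q hq hq0, blockWeight] using hKmax
    · simpa [hMA q hq, blockWeight] using (hABC q hq).1
    · simpa [hMB q hq, blockWeight] using (hABC q hq).2.1
    · simpa [hMC q hq, blockWeight] using (hABC q hq).2.2
  rcases eq_or_ne u 0 with rfl | hu0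
  · simp [hM0]
  rcases eq_or_ne (v - u) 0 with hw0 | hw0
  · obtain rfl := le_antisymm huv (tsub_eq_zero_iff_le.mp hw0)
    simp [hM0]
  have hv0 : v ≠ 0 := fun h => hu0 (le_antisymm (h ▸ huv) fun _ => Nat.zero_le _)
  have hsum : u + (v - u) = v := add_tsub_cancel_of_le huv
  have hwv : v - u ≤ v := tsub_le_self
  obtain ⟨a, ha, x, hx, rfl⟩ := exists_add_single_eq e L fun i => (huv i).trans_lt (hv i)
  obtain ⟨b, hb, y, hy, hyw⟩ := exists_add_single_eq e L fun i => (hwv i).trans_lt (hv i)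
  obtain ⟨c, hc, z, hz, rfl⟩ := exists_add_single_eq e L hv
  rw [← hyw] at hsum hw0 ⊢
  have hcarry := block_add_or_carry e L hx hy hz hsum
  by_cases htight : (a = 1 ∧ b = 2) ∨ (a = 2 ∧ b = 1)
  · obtain ⟨rfl, rfl⟩ : c = a + b ∧ x + y = z := hcarry.resolve_right (by omega)
    rcases htight with ⟨rfl, rfl⟩ | ⟨rfl, rfl⟩
    · have hxy := hconv x (x + y) hz fun i => Nat.le_add_right _ _
      rw [add_tsub_cancel_left] at hxy
      rw [one_mul, hMA x hx, hMB y hy, hMC _ hz]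
      linarith
    · have hyx := hconv y (x + y) hz fun i => Nat.le_add_left _ _
      rw [add_tsub_cancel_right] at hyx
      rw [one_mul, hMB x hx, hMA y hy, hMC _ hz]
      linarith
  · exact add_le_of_abs_sub_blockWeight_le hKmax hK (hblock a ha x hx hu0) (hblock b hb y hy hw0)
      (hblock c hc z hz hv0) (blockWeight_add_add_two_le hc (hcarry.imp_left And.left) htight)

end Superadditivity

theorem stmt5_general (d : ℕ) (hd : 0 < d) (L : Fin d → ℕ)
    (A B C : (Fin d → ℕ) → ℤ) (Kmax K : ℤ)
    (hKmax : IsGreatest {x : ℤ | ∃ v : Fin d → ℕ, (∀ i, v i < L i) ∧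
      x = max |A v| (max |B v| |C v|)} Kmax)
    (hK : K = 1 + 2 * Kmax)
    (L' : Fin d → ℕ)
    (hL' : ∀ i, L' i = if i = (⟨0, hd⟩ : Fin d) then 4 * L i else L i)
    (M : (Fin d → ℕ) → ℤ)
    (hM0 : M 0 = 0)
    (hMneg : ∀ v : Fin d → ℕ, (∀ i, v i < L' i) → v ⟨0, hd⟩ < L ⟨0, hd⟩ →
      v ≠ 0 → M v = -10 * K)
    (hMA : ∀ u : Fin d → ℕ, (∀ i, u i < L i) →
      M (fun i => if i = (⟨0, hd⟩ : Fin d) then L i + u i else u i) = K + A u)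
    (hMB : ∀ u : Fin d → ℕ, (∀ i, u i < L i) →
      M (fun i => if i = (⟨0, hd⟩ : Fin d) then 2 * L i + u i else u i) = 4 * K + B u)
    (hMC : ∀ u : Fin d → ℕ, (∀ i, u i < L i) →
      M (fun i => if i = (⟨0, hd⟩ : Fin d) then 3 * L i + u i else u i) = 5 * K + C u) :
    (∀ u v : Fin d → ℕ, (∀ i, v i < L' i) → (∀ i, u i ≤ v i) →
        M u + M (v - u) ≤ M v) ↔
    (∀ u v : Fin d → ℕ, (∀ i, v i < L i) → (∀ i, u i ≤ v i) →
        A u + B (v - u) ≤ C v) := by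
  set e : Fin d := ⟨0, hd⟩
  obtain ⟨⟨v₀, -, hv₀⟩, hKmax_ub⟩ := hKmax
  have hKmax_nonneg : 0 ≤ Kmax := hv₀ ▸ (abs_nonneg _).trans (le_max_left _ _)
  have hABC : ∀ q, (∀ i, q i < L i) → |A q| ≤ Kmax ∧ |B q| ≤ Kmax ∧ |C q| ≤ Kmax :=
    fun q hq => by simpa only [max_le_iff] using hKmax_ub ⟨q, hq, rfl⟩
  obtain rfl : L' = L + Pi.single e (3 * L e) := by
    funext i
    by_cases hi : i = e
    · subst hi; simp only [hL', if_pos, Pi.add_apply, Pi.single_eq_same]; omega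
    · simp [hL', hi]
  have hMA' : ∀ q, (∀ i, q i < L i) → M (q + Pi.single e (L e)) = K + A q := fun q hq => by
    rw [← ite_add_eq_add_single e L, hMA q hq]
  have hMB' : ∀ q, (∀ i, q i < L i) → M (q + Pi.single e (2 * L e)) = 4 * K + B q := fun q hq => by
    rw [← ite_add_eq_add_single e (fun i => 2 * L i), hMB q hq]
  have hMC' : ∀ q, (∀ i, q i < L i) → M (q + Pi.single e (3 * L e)) = 5 * K + C q := fun q hq => by
    rw [← ite_add_eq_add_single e (fun i => 3 * L i), hMC q hq]
  have hMneg' : ∀ q, (∀ i, q i < L i) → q ≠ 0 → M q = -10 * K := fun q hq hq0 =>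
    hMneg q (fun i => (hq i).trans_le (Nat.le_add_right _ _)) (hq e) hq0
  exact ⟨convolution_le_of_superadditive e L hMA' hMB' hMC',
    superadditive_of_convolution_le e L hKmax_nonneg hK hABC hM0 hMneg' hMA' hMB' hMC'⟩

/-- reduction from the upper-bound test to superadditivity.
Given arrays `A, B, C` of size `L`, `K = 1 + 2·max_v max{|A v|, |B v|, |C v|}`,
and the compound array `M` of size `L' = L + 3L₁e₁` consisting of a dummy block
(with `M 0 = 0` and value `−10K` elsewhere) followed by the blocks `K + A`,
`4K + B` and `5K + C` stacked along the first dimension, we have: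
`M` is superadditive iff `(A ⊕ B) v ≤ C v` for every position `v`. -/
theorem stmt5 (d : ℕ) (hd : 0 < d) (L : Fin d → ℕ) (hL : ∀ i, 1 ≤ L i)
    (A B C : (Fin d → ℕ) → ℤ) (Kmax K : ℤ)
    (hKmax : IsGreatest {x : ℤ | ∃ v : Fin d → ℕ, (∀ i, v i < L i) ∧
      x = max |A v| (max |B v| |C v|)} Kmax)
    (hK : K = 1 + 2 * Kmax)
    (L' : Fin d → ℕ)
    (hL' : ∀ i, L' i = if i = (⟨0, hd⟩ : Fin d) then 4 * L i else L i)
    (M : (Fin d → ℕ) → ℤ)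
    (hM0 : M 0 = 0)
    (hMneg : ∀ v : Fin d → ℕ, (∀ i, v i < L' i) → v ⟨0, hd⟩ < L ⟨0, hd⟩ →
      v ≠ 0 → M v = -10 * K)
    (hMA : ∀ u : Fin d → ℕ, (∀ i, u i < L i) →
      M (fun i => if i = (⟨0, hd⟩ : Fin d) then L i + u i else u i) = K + A u)
    (hMB : ∀ u : Fin d → ℕ, (∀ i, u i < L i) →
      M (fun i => if i = (⟨0, hd⟩ : Fin d) then 2 * L i + u i else u i) = 4 * K + B u)
    (hMC : ∀ u : Fin d → ℕ, (∀ i, u i < L i) →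
      M (fun i => if i = (⟨0, hd⟩ : Fin d) then 3 * L i + u i else u i) = 5 * K + C u) :
    (∀ u v : Fin d → ℕ, (∀ i, v i < L' i) → (∀ i, u i ≤ v i) →
        M u + M (v - u) ≤ M v) ↔
    (∀ u v : Fin d → ℕ, (∀ i, v i < L i) → (∀ i, u i ≤ v i) →
        A u + B (v - u) ≤ C v) :=
  stmt5_general d hd L A B C Kmax K hKmax hK L' hL' M hM0 hMneg hMA hMB hMC
end

section
/- Let I be a finite set of items, where item i has weight vector w(i) ∈ ℕ^d, profit p_i ∈ ℤ, and multiplicity bound u_i ∈ ℕ. For J ⊆ I and v ∈ ℕ^d let G(J, v) ∈ ℤ ∪ {−∞} be the maximum of ∑_{i∈J} x_i·p_i over all x ∈ ℕ^J with x_i ≤ u_i for all i ∈ J and ∑_{i∈J} x_i·w(i) = v (and G(J, v) = −∞ if no such x exists). Fix w ∈ ℕ^d, let J_w = {i ∈ I : w(i) = w} and J = I \ J_w, and let f(k) ∈ ℤ ∪ {−∞} be the maximum of ∑_{i∈J_w} x_i·p_i over x ∈ ℕ^{J_w} with x_i ≤ u_i and ∑_{i∈J_w} x_i = k. Then for every v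 ∈ ℕ^d: G(I, v) = max over k ∈ ℕ with k·w ≤ v componentwise and k ≤ ∑_{i∈J_w} u_i of ( G(J, v − k·w) + f(k) ), where addition with −∞ yields −∞. -/
/-!
Group the items of a packing into those of weight `wt` and the rest. If the first group has `k`
items, it weighs `k • wt` and earns at most `f k`, while the rest is a packing for `J` of weight
`v - k • wt`. Conversely, a packing for `J` of weight `v - k • wt` plus `k` items of weight `wt`
is a packing of weight `v`, and it respects the bounds `u` because the two supports are disjoint.
-/

open Finset

lemma EReal.sSup_add_sSup_le {A B : Set EReal} {c : EReal}
    (h : ∀ a ∈ A, ∀ b ∈ B, a + b ≤ c) : sSup A + sSup B ≤ c := by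
  refine EReal.add_le_of_forall_lt fun a ha b hb => ?_
  obtain ⟨a', ha'A, haa'⟩ := lt_sSup_iff.mp ha
  obtain ⟨b', hb'B, hbb'⟩ := lt_sSup_iff.mp hb
  exact (add_le_add haa'.le hbb'.le).trans (h a' ha'A b' hb'B)

namespace Knapsack

variable {ι : Type*} {s : Finset ι}

lemma add_le_of_disjoint_support {u y z : ι → ℕ} (hyu : y ≤ u) (hzu : z ≤ u)
    (hy : ∀ i ∈ s, y i = 0) (hz : ∀ i ∉ s, z i = 0) : y + z ≤ u := fun i => by
  by_cases hi : i ∈ s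
  · simpa [hy i hi] using hzu i
  · simpa [hz i hi] using hyu i

variable [Fintype ι]

lemma coe_sum_mul_add (p : ι → ℤ) (x y : ι → ℕ) :
    (((∑ i, ((x + y) i : ℤ) * p i : ℤ) : ℝ) : EReal) =
      (((∑ i, (x i : ℤ) * p i : ℤ) : ℝ) : EReal) +
        (((∑ i, (y i : ℤ) * p i : ℤ) : ℝ) : EReal) := by
  rw [← EReal.coe_add, ← Int.cast_add, ← sum_add_distrib]
  push_cast [Pi.add_apply, add_mul]
  rfl

variable {d : ℕ} {w : ι → Fin d → ℕ} {wt : Fin d → ℕ}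

lemma sum_mul_weight_eq_of_support_subset (hs : ∀ i ∈ s, w i = wt) {x : ι → ℕ}
    (hx : ∀ i ∉ s, x i = 0) (j : Fin d) : ∑ i, x i * w i j = (∑ i, x i) * wt j := by
  rw [sum_mul]
  refine sum_congr rfl fun i _ => ?_
  by_cases hi : i ∈ s
  · rw [hs i hi]
  · simp [hx i hi]

lemma sum_le_sum_of_support_subset {u x : ι → ℕ} (hxu : x ≤ u)
    (hx : ∀ i ∉ s, x i = 0) : ∑ i, x i ≤ ∑ i ∈ s, u i :=
  calc ∑ i, x i = ∑ i ∈ s, x i :=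
        (sum_subset (subset_univ s) fun i _ hi => hx i hi).symm
    _ ≤ ∑ i ∈ s, u i := sum_le_sum fun i _ => hxu i

lemma exists_split_of_sum_mul_weight_eq (hs : ∀ i ∈ s, w i = wt) {u x : ι → ℕ}
    {v : Fin d → ℕ} (hxu : x ≤ u) (hxv : ∀ j, ∑ i, x i * w i j = v j) :
    ∃ y z : ι → ℕ, y + z = x ∧ y ≤ u ∧ (∀ i ∈ s, y i = 0) ∧ z ≤ u ∧ (∀ i ∉ s, z i = 0) ∧
      (∀ j, (∑ i, z i) * wt j ≤ v j) ∧ ∑ i, z i ≤ ∑ i ∈ s, u i ∧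
      ∀ j, ∑ i, y i * w i j = v j - (∑ i, z i) * wt j := by
  classical
  set y : ι → ℕ := fun i => if i ∈ s then 0 else x i
  set z : ι → ℕ := fun i => if i ∈ s then x i else 0
  have hyz : y + z = x := funext fun i => by by_cases hi : i ∈ s <;> simp [y, z, hi]
  have hyu : y ≤ u := fun i => by by_cases hi : i ∈ s <;> simp [y, hi, hxu i]
  have hzu : z ≤ u := fun i => by by_cases hi : i ∈ s <;> simp [z, hi, hxu i]
  have hz : ∀ i ∉ s, z i = 0 := fun i hi => by simp [z, hi]
  have hweight (j : Fin d) : ∑ i, y i * w i j + (∑ i, z i) * wt j = v j := by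
    rw [← sum_mul_weight_eq_of_support_subset hs hz, ← sum_add_distrib, ← hxv j, ← hyz]
    simp only [Pi.add_apply, add_mul]
  refine ⟨y, z, hyz, hyu, fun i hi => by simp [y, hi], hzu, hz, fun j => ?_,
    sum_le_sum_of_support_subset hzu hz, fun j => ?_⟩ <;>
  · have := hweight j
    omega

lemma sum_mul_weight_add_eq (hs : ∀ i ∈ s, w i = wt) {y z : ι → ℕ} {v : Fin d → ℕ}
    {k : ℕ} (hkv : ∀ j, k * wt j ≤ v j) (hyv : ∀ j, ∑ i, y i * w i j = v j - k * wt j)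
    (hz : ∀ i ∉ s, z i = 0) (hzk : ∑ i, z i = k) (j : Fin d) :
    ∑ i, (y + z) i * w i j = v j := by
  have hzv := sum_mul_weight_eq_of_support_subset hs hz j
  simp only [Pi.add_apply, add_mul, sum_add_distrib, hyv, hzv, hzk]
  have := hkv j
  omega

end Knapsack

open Knapsack

/-- recurrence for bounded knapsack, grouping items of a fixed
weight.  Items `i : Fin N` have weights `w i ∈ ℕ^d`, profits `p i ∈ ℤ` and
multiplicity bounds `u i`.  `G J v` is the best profit using only items of `J`
with multiplicities `≤ u` and total weight exactly `v` (`⊥ = −∞` if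
infeasible), and for a fixed weight `wt`, `f k` is the best profit of exactly
`k` items of weight `wt` (with multiplicities `≤ u`).  With
`Jw = {i | w i = wt}` and `J = I \ Jw`:
`G I v = max { G J (v − k·wt) + f k | k·wt ≤ v, k ≤ ∑_{i ∈ Jw} u i }`. -/
theorem stmt7 (d N : ℕ) (w : Fin N → Fin d → ℕ) (p : Fin N → ℤ) (u : Fin N → ℕ)
    (wt : Fin d → ℕ)
    (Jw J : Finset (Fin N))
    (hJw : Jw = Finset.univ.filter (fun i => w i = wt))
    (hJ : J = Finset.univ \ Jw)
    (G : Finset (Fin N) → (Fin d → ℕ) → EReal)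
    (hG : ∀ (J' : Finset (Fin N)) (v : Fin d → ℕ),
      G J' v = sSup {z : EReal | ∃ x : Fin N → ℕ,
        (∀ i, x i ≤ u i) ∧ (∀ i, i ∉ J' → x i = 0) ∧
        (∀ j, ∑ i, x i * w i j = v j) ∧
        z = (((∑ i, (x i : ℤ) * p i : ℤ) : ℝ) : EReal)})
    (f : ℕ → EReal)
    (hf : ∀ k : ℕ, f k = sSup {z : EReal | ∃ x : Fin N → ℕ,
        (∀ i, x i ≤ u i) ∧ (∀ i, i ∉ Jw → x i = 0) ∧
        (∑ i, x i) = k ∧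
        z = (((∑ i, (x i : ℤ) * p i : ℤ) : ℝ) : EReal)})
    (v : Fin d → ℕ) :
    G Finset.univ v = sSup {z : EReal | ∃ k : ℕ,
      (∀ j, k * wt j ≤ v j) ∧ k ≤ ∑ i ∈ Jw, u i ∧
      z = G J (fun j => v j - k * wt j) + f k} := by
  have hs : ∀ i ∈ Jw, w i = wt := by simp [hJw]
  have hJ_mem : ∀ i, i ∉ J ↔ i ∈ Jw := by simp [hJ]
  rw [hG]
  apply le_antisymm
  · refine sSup_le ?_
    rintro _ ⟨x, hxu, -, hxv, rfl⟩
    obtain ⟨y, z, rfl, hyu, hy, hzu, hz, hkv, hku, hyv⟩ :=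
      exists_split_of_sum_mul_weight_eq hs hxu hxv
    refine le_sSup_of_le ⟨∑ i, z i, hkv, hku, rfl⟩ ?_
    rw [coe_sum_mul_add, hG, hf]
    exact add_le_add (le_sSup ⟨y, hyu, fun i hi => hy i ((hJ_mem i).mp hi), hyv, rfl⟩)
      (le_sSup ⟨z, hzu, hz, rfl, rfl⟩)
  · refine sSup_le ?_
    rintro _ ⟨k, hkv, -, rfl⟩
    rw [hG, hf]
    refine EReal.sSup_add_sSup_le ?_
    rintro _ ⟨y, hyu, hy, hyv, rfl⟩ _ ⟨z, hzu, hz, hzk, rfl⟩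
    rw [← coe_sum_mul_add]
    have hy' : ∀ i ∈ Jw, y i = 0 := fun i hi => hy i ((hJ_mem i).mpr hi)
    exact le_sSup ⟨y + z, add_le_of_disjoint_support hyu hzu hy' hz,
      fun i hi => absurd (mem_univ i) hi, sum_mul_weight_add_eq hs hkv hyv hz hzk, rfl⟩
end

section
/- Let L ∈ ℕ^d with L_i ≥ 1 for all i, let A and B be d-dimensional arrays of size L with integer entries, and define φ : ℕ^d → ℕ by φ(v) = ∑_{i=1}^d v_i · ∏_{m=1}^{i−1} (2L_m − 1). Define sequences a, b indexed by m ∈ ℕ with values in ℤ ∪ {−∞} by a_m = A_v if m = φ(v) for some position v ≤ L − 1 and a_m = −∞ otherwise, and analogously b from B. Then for every position v ≤ L − 1: (A ⊕ B)_v = max_{0 ≤ m ≤ φ(v)} ( a_m + b_{φ(v)−m} ), where addition with −∞ yields −∞. (That is, the d-dimensional (max,+)-convolution can be read off from the one-dimensional (max,+)-convolution of the linearized, padded sequences.) -/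
/-!
The linearization `φ` reads a position as a number in the mixed radix with bases `2 L i - 1`.
It is additive, and since two positions add up digitwise to at most `2 L i - 2`, the equation
`φ u + φ w = φ v` between positions forces `u + w = v` by uniqueness of mixed-radix digits.
Hence the one-dimensional terms `a m + b (φ v - m)` are exactly the terms `A u + B (v - u)`,
together with terms equal to `-∞`, which do not change the supremum.
-/

open Finset

theorem Fin.Iio_eq_map_castLEEmb {d : ℕ} (i : Fin d) :
    Iio i = univ.map (Fin.castLEEmb i.is_lt.le) := by
  ext x
  simp only [mem_Iio, mem_map, mem_univ, true_and, Fin.castLEEmb_apply]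
  constructor
  · intro h
    exact ⟨⟨x, h⟩, rfl⟩
  · rintro ⟨j, rfl⟩
    exact j.is_lt

def mixedRadix {d : ℕ} (r x : Fin d → ℕ) : ℕ :=
  ∑ i, x i * ∏ m ∈ Iio i, r m

section mixedRadix

variable {d : ℕ} (r : Fin d → ℕ)

theorem mixedRadix_add (x y : Fin d → ℕ) :
    mixedRadix r (x + y) = mixedRadix r x + mixedRadix r y := by
  simp only [mixedRadix, Pi.add_apply, add_mul, sum_add_distrib]

theorem mixedRadix_eq_finPiFinEquiv (x : ∀ i, Fin (r i)) :
    mixedRadix r (fun i => x i) = finPiFinEquiv x := by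
  simp only [mixedRadix, finPiFinEquiv_apply, Fin.Iio_eq_map_castLEEmb, prod_map,
    Fin.castLEEmb_apply]

theorem mixedRadix_injOn : Set.InjOn (mixedRadix r) {x | ∀ i, x i < r i} := by
  intro x hx y hy hxy
  have := finPiFinEquiv.injective <| Fin.ext <|
    (mixedRadix_eq_finPiFinEquiv r fun i => ⟨x i, hx i⟩).symm.trans <|
      hxy.trans (mixedRadix_eq_finPiFinEquiv r fun i => ⟨y i, hy i⟩)
  funext i
  exact congrArg Fin.val (congrFun this i)

end mixedRadix

-- With base `2 L i - 1`, adding two digits below `L i` never carries.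
theorem add_eq_of_mixedRadix_add_eq {d : ℕ} {L u w v : Fin d → ℕ} (hu : ∀ i, u i < L i)
    (hw : ∀ i, w i < L i) (hv : ∀ i, v i < L i)
    (h : mixedRadix (fun i => 2 * L i - 1) u + mixedRadix (fun i => 2 * L i - 1) w =
      mixedRadix (fun i => 2 * L i - 1) v) :
    u + w = v := by
  refine mixedRadix_injOn _ (fun i => ?_) (fun i => ?_) ((mixedRadix_add _ u w).trans h)
  · have := hu i; have := hw i; simp only [Pi.add_apply]; omega
  · have := hv i; omega

theorem stmt11_general (d : ℕ) (L : Fin d → ℕ)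
    (A B : (Fin d → ℕ) → ℤ)
    (φ : (Fin d → ℕ) → ℕ)
    (hφ : ∀ v : Fin d → ℕ, φ v = ∑ i, v i * ∏ m ∈ Finset.Iio i, (2 * L m - 1))
    (a b : ℕ → EReal)
    (haA : ∀ v : Fin d → ℕ, (∀ i, v i < L i) → a (φ v) = ((A v : ℝ) : EReal))
    (haBot : ∀ m : ℕ, (∀ v : Fin d → ℕ, (∀ i, v i < L i) → φ v ≠ m) → a m = ⊥)
    (hbB : ∀ v : Fin d → ℕ, (∀ i, v i < L i) → b (φ v) = ((B v : ℝ) : EReal))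
    (hbBot : ∀ m : ℕ, (∀ v : Fin d → ℕ, (∀ i, v i < L i) → φ v ≠ m) → b m = ⊥)
    (v : Fin d → ℕ) (hv : ∀ i, v i < L i) :
    sSup {z : EReal | ∃ u : Fin d → ℕ, (∀ i, u i ≤ v i) ∧
        z = (((A u + B (v - u) : ℤ) : ℝ) : EReal)}
      = sSup {z : EReal | ∃ m : ℕ, m ≤ φ v ∧ z = a m + b (φ v - m)} := by
  have hφr : φ = mixedRadix (fun i => 2 * L i - 1) := funext hφ
  have hφ_add (u w : Fin d → ℕ) : φ (u + w) = φ u + φ w := hφr ▸ mixedRadix_add _ u w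
  have hcoe (u w : Fin d → ℕ) :
      (((A u + B w : ℤ) : ℝ) : EReal) = ((A u : ℝ) : EReal) + ((B w : ℝ) : EReal) := by
    push_cast; rfl
  refine le_antisymm (sSup_le_sSup ?_) (sSup_le_sSup_of_subset_insert_bot ?_)
  · rintro _ ⟨u, hu, rfl⟩
    have hsplit : φ v = φ u + φ (v - u) := by rw [← hφ_add, add_tsub_cancel_of_le hu]
    refine ⟨φ u, hsplit ▸ Nat.le_add_right _ _, ?_⟩
    rw [hsplit, Nat.add_sub_cancel_left, haA u fun i => (hu i).trans_lt (hv i),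
      hbB (v - u) fun i => (Nat.sub_le _ _).trans_lt (hv i), hcoe]
  · rintro _ ⟨m, hm, rfl⟩
    by_cases hA : ∃ u, (∀ i, u i < L i) ∧ φ u = m
    · obtain ⟨u, hu, rfl⟩ := hA
      by_cases hB : ∃ w, (∀ i, w i < L i) ∧ φ w = φ v - φ u
      · obtain ⟨w, hw, hwm⟩ := hB
        have huw : u + w = v := add_eq_of_mixedRadix_add_eq hu hw hv (hφr ▸ by omega)
        right
        refine ⟨u, fun i => huw ▸ Nat.le_add_right (u i) (w i), ?_⟩
        rw [← hwm, haA u hu, hbB w hw, ← huw, add_tsub_cancel_left, hcoe]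
      · push Not at hB
        left
        rw [hbBot _ hB, EReal.add_bot]
    · push Not at hA
      left
      rw [haBot m hA, EReal.bot_add]

/-- `d`-dimensional (max,+)-convolution via the linearized,
padded one-dimensional sequences.  With `φ v = ∑_i v i · ∏_{m<i} (2 L m − 1)`
and sequences `a, b : ℕ → EReal` defined by `a (φ v) = A v` for positions `v`
and `a m = −∞` for `m` not of the form `φ v` (likewise `b` from `B`), we have,
for every position `v`:
`(A ⊕ B) v = max_{0 ≤ m ≤ φ v} (a m + b (φ v − m))`. -/
theorem stmt11 (d : ℕ) (L : Fin d → ℕ) (hL : ∀ i, 1 ≤ L i)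
    (A B : (Fin d → ℕ) → ℤ)
    (φ : (Fin d → ℕ) → ℕ)
    (hφ : ∀ v : Fin d → ℕ, φ v = ∑ i, v i * ∏ m ∈ Finset.Iio i, (2 * L m - 1))
    (a b : ℕ → EReal)
    (haA : ∀ v : Fin d → ℕ, (∀ i, v i < L i) → a (φ v) = ((A v : ℝ) : EReal))
    (haBot : ∀ m : ℕ, (∀ v : Fin d → ℕ, (∀ i, v i < L i) → φ v ≠ m) → a m = ⊥)
    (hbB : ∀ v : Fin d → ℕ, (∀ i, v i < L i) → b (φ v) = ((B v : ℝ) : EReal))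
    (hbBot : ∀ m : ℕ, (∀ v : Fin d → ℕ, (∀ i, v i < L i) → φ v ≠ m) → b m = ⊥)
    (v : Fin d → ℕ) (hv : ∀ i, v i < L i) :
    sSup {z : EReal | ∃ u : Fin d → ℕ, (∀ i, u i ≤ v i) ∧
        z = (((A u + B (v - u) : ℤ) : ℝ) : EReal)}
      = sSup {z : EReal | ∃ m : ℕ, m ≤ φ v ∧ z = a m + b (φ v - m)} :=
  stmt11_general d L A B φ hφ a b haA haBot hbB hbBot v hv
end

section
/- Let A ∈ ℤ^{d×n}, b ∈ ℤ^d, c ∈ ℤ^n, u ∈ ℕ^n, and suppose the feasible set F = {x ∈ ℕ^n : Ax = b, x ≤ u componentwise} is nonempty. Then there exists x* ∈ F maximizing cᵀx over F such that for all indices i, j ∈ [n] with identical columns A_i = A_j and with (c_i, i) lexicographically greater than (c_j, j) (i.e. c_i > c_j, or c_i = c_j and i > j): if x*_j > 0 then x*_i = u_i. -/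
/-!
Maximize the objective `cᵀx` over the (finite) feasible set and break ties by maximizing the
secondary objective `∑ i * x i`, i.e. maximize `(cᵀx, ∑ i * x i)` lexicographically. If the
conclusion failed for some `i, j`, moving one unit from `x j` to `x i` would keep `x` feasible
(the columns agree and `x i < u i`) and change that pair by `(c i - c j, i - j) > 0`.
-/

open Matrix

section ExchangeArgument

variable {ι m : Type*} [DecidableEq ι]

theorem cast_comp_add_single_sub_single {x : ι → ℕ} {i j : ι} (hj : 0 < x j) :
    (Nat.cast ∘ (x + Pi.single i 1 - Pi.single j 1) : ι → ℤ) =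
      Nat.cast ∘ x + Pi.single i 1 - Pi.single j 1 := by
  funext k
  simp only [Function.comp_apply, Pi.add_apply, Pi.sub_apply, Pi.single_apply]
  split_ifs <;> simp_all

variable [Fintype ι]

def boxFeasibleSet (A : Matrix m ι ℤ) (b : m → ℤ) (u : ι → ℕ) : Set (ι → ℕ) :=
  {x | A *ᵥ (Nat.cast ∘ x) = b ∧ x ≤ u}

theorem boxFeasibleSet_finite (A : Matrix m ι ℤ) (b : m → ℤ) (u : ι → ℕ) :
    (boxFeasibleSet A b u).Finite :=
  (Set.finite_Iic u).subset fun _ hx => hx.2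

theorem cast_comp_add_single_sub_single_dotProduct {x : ι → ℕ} {i j : ι} (hj : 0 < x j)
    (v : ι → ℤ) :
    (Nat.cast ∘ (x + Pi.single i 1 - Pi.single j 1)) ⬝ᵥ v = (Nat.cast ∘ x) ⬝ᵥ v + v i - v j := by
  rw [cast_comp_add_single_sub_single hj, sub_dotProduct, add_dotProduct,
    single_one_dotProduct, single_one_dotProduct]

theorem add_single_sub_single_mem_boxFeasibleSet {A : Matrix m ι ℤ} {b : m → ℤ} {u x : ι → ℕ}
    {i j : ι} (hx : x ∈ boxFeasibleSet A b u) (hcol : A.col i = A.col j) (hj : 0 < x j)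
    (hi : x i < u i) : x + Pi.single i 1 - Pi.single j 1 ∈ boxFeasibleSet A b u := by
  refine ⟨?_, fun k => ?_⟩
  · rw [cast_comp_add_single_sub_single hj, mulVec_sub, mulVec_add, mulVec_single_one,
      mulVec_single_one, hcol, add_sub_cancel_right, hx.1]
  · calc (x + Pi.single i 1 - Pi.single j 1 : ι → ℕ) k ≤ x k + (Pi.single i 1 : ι → ℕ) k :=
        tsub_le_self
      _ ≤ u k := by
        rcases eq_or_ne k i with rfl | hk
        · simpa using hi
        · simpa [hk] using hx.2 k

theorem exists_optimal_with_lexGreater_saturated (A : Matrix m ι ℤ) (b : m → ℤ) (c w : ι → ℤ)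
    (u : ι → ℕ) (hne : (boxFeasibleSet A b u).Nonempty) :
    ∃ x ∈ boxFeasibleSet A b u,
      (∀ y ∈ boxFeasibleSet A b u, (Nat.cast ∘ y) ⬝ᵥ c ≤ (Nat.cast ∘ x) ⬝ᵥ c) ∧
      ∀ i j, A.col i = A.col j → toLex (c j, w j) < toLex (c i, w i) → 0 < x j → x i = u i := by
  obtain ⟨x, hx, hmax⟩ := (boxFeasibleSet A b u).exists_max_image
    (fun y => toLex ((Nat.cast ∘ y) ⬝ᵥ c, (Nat.cast ∘ y) ⬝ᵥ w)) (boxFeasibleSet_finite A b u) hne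
  refine ⟨x, hx, fun y hy => Prod.Lex.monotone_fst _ _ (hmax y hy), fun i j hcol hlt hj => ?_⟩
  by_contra hi
  have hi : x i < u i := (hx.2 i).lt_of_ne hi
  have hy := hmax _ (add_single_sub_single_mem_boxFeasibleSet hx hcol hj hi)
  rw [Prod.Lex.lt_iff] at hlt
  rw [Prod.Lex.le_iff] at hy
  simp only [ofLex_toLex, cast_comp_add_single_sub_single_dotProduct hj] at hlt hy
  omega

end ExchangeArgument

/-- existence of a structured optimal ILP solution.  If the
feasible set `F = {x ∈ ℕ^n | Ax = b, x ≤ u}` is nonempty, then there is an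
optimal solution `x*` such that for any indices `i, j` with equal columns
`A_i = A_j` and `(c i, i)` lexicographically greater than `(c j, j)`:
`x* j > 0` implies `x* i = u i`. -/
theorem stmt14 (d n : ℕ) (A : Matrix (Fin d) (Fin n) ℤ) (b : Fin d → ℤ)
    (c : Fin n → ℤ) (u : Fin n → ℕ)
    (hne : ∃ x : Fin n → ℕ,
      (∀ j, ∑ i, A j i * (x i : ℤ) = b j) ∧ ∀ i, x i ≤ u i) :
    ∃ x : Fin n → ℕ,
      ((∀ j, ∑ i, A j i * (x i : ℤ) = b j) ∧ ∀ i, x i ≤ u i) ∧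
      (∀ y : Fin n → ℕ,
        ((∀ j, ∑ i, A j i * (y i : ℤ) = b j) ∧ ∀ i, y i ≤ u i) →
        ∑ i, (y i : ℤ) * c i ≤ ∑ i, (x i : ℤ) * c i) ∧
      (∀ i j : Fin n, (∀ r, A r i = A r j) →
        (c j < c i ∨ (c i = c j ∧ j < i)) → 0 < x j → x i = u i) := by
  have mem_iff (x : Fin n → ℕ) : x ∈ boxFeasibleSet A b u ↔
      (∀ j, ∑ i, A j i * (x i : ℤ) = b j) ∧ ∀ i, x i ≤ u i :=
    and_congr_left' funext_iff
  obtain ⟨x, hx, hopt, hsat⟩ :=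
    exists_optimal_with_lexGreater_saturated A b c (fun k => (k : ℤ)) u (by simpa only [Set.Nonempty, mem_iff] using hne)
  refine ⟨x, (mem_iff x).1 hx, fun y hy => hopt y ((mem_iff y).2 hy), ?_⟩
  intro i j hcol hlex
  refine hsat i j (funext hcol) (Prod.Lex.lt_iff.2 ?_)
  simp only [ofLex_toLex, Nat.cast_lt, Fin.val_fin_lt]
  exact hlex.imp_right fun h => ⟨h.1.symm, h.2⟩
end
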